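/- Let C and D be reflexive digraph cycles with D non-contractible. Then the wind of homomorphisms is constant over connected components of Hom(C,D): if φ and ψ lie in the same connected component of Hom(C,D), then w(φ) = w(ψ). -/

import Mathlib

open scoped Classical

namespace Recon

/-- Orientation letters for edges of a digraph cycle: `+`, `-`, `*`. -/
inductive Orient : Type
  | plus
  | minus
  | star
deriving DecidableEq

/-- A forward arc is allowed along an edge with this orientation letter. -/
def Orient.fwd : Orient → Prop
  | Orient.plus => True
  | Orient.minus => False
  | Orient.star => True

/-- A backward arc is allowed along an edge with this orientation letter. -/
def Orient.bwd : Orient → Prop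
  | Orient.plus => False
  | Orient.minus => True
  | Orient.star => True

/-- The arc relation of the reflexive digraph cycle on `ZMod m` whose orientation
string is `f`, where `f c` is the orientation of the edge from `c` to `c + 1`. -/
def cycRel {m : ℕ} (f : ZMod m → Orient) (u v : ZMod m) : Prop :=
  u = v ∨ (v = u + 1 ∧ (f u).fwd) ∨ (u = v + 1 ∧ (f v).bwd)

/-- `φ` is a digraph homomorphism. -/
def IsHom {α β : Type*} (rG : α → α → Prop) (rH : β → β → Prop) (φ : α → β) : Prop :=
  ∀ u v, rG u v → rH (φ u) (φ v)

/-- The arc relation of the Hom-graph `Hom(G,H)`. -/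
def HomArc {α β : Type*} (rG : α → α → Prop) (rH : β → β → Prop) (φ ψ : α → β) : Prop :=
  ∀ u v, rG u v → rH (φ u) (ψ v)

/-- `φψ` is an edge of the Hom-graph. -/
def HomEdge {α β : Type*} (rG : α → α → Prop) (rH : β → β → Prop) (φ ψ : α → β) : Prop :=
  HomArc rG rH φ ψ ∨ HomArc rG rH ψ φ

/-- The contribution of the edge `c (c+1)` of `C` to the increase of `φ`:
`1` if increasing, `-1` if decreasing, `0` if stationary. -/
def edgeVal {m n : ℕ} (φ : ZMod m → ZMod n) (c : ZMod m) : ℤ :=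
  if φ (c + 1) = φ c + 1 then 1 else if φ (c + 1) = φ c - 1 then -1 else 0

/-- The increase of a map between cycles: #increasing − #decreasing edges. -/
def increase {m n : ℕ} (φ : ZMod m → ZMod n) : ℤ :=
  ∑ j ∈ Finset.range m, edgeVal φ ((j : ℕ) : ZMod m)

/-- The increase of the subpath `c_a … c_{a+L}`. -/
def partialInc {m n : ℕ} (φ : ZMod m → ZMod n) (a : ZMod m) (L : ℕ) : ℤ :=
  ∑ j ∈ Finset.range L, edgeVal φ (a + ((j : ℕ) : ZMod m))

/-- `φ` has wind `w`, i.e. its increase is `w * n`. -/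
def HasWind {m n : ℕ} (φ : ZMod m → ZMod n) (w : ℤ) : Prop :=
  increase φ = w * (n : ℤ)

/-- A reflexive digraph cycle is non-contractible if it has length at least 4
or is a directed 3-cycle. -/
def NonContractible {n : ℕ} (f : ZMod n → Orient) : Prop :=
  4 ≤ n ∨ (n = 3 ∧ ((∀ i, f i = Orient.plus) ∨ (∀ i, f i = Orient.minus)))

/-- `φ` is increasing: every edge increasing or stationary, not all stationary. -/
def IncMap {m n : ℕ} (φ : ZMod m → ZMod n) : Prop :=
  (∀ c, φ (c + 1) = φ c + 1 ∨ φ (c + 1) = φ c) ∧ ∃ c, φ (c + 1) = φ c + 1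

/-- `φ` is decreasing: every edge decreasing. -/
def DecMap {m n : ℕ} (φ : ZMod m → ZMod n) : Prop :=
  ∀ c, φ (c + 1) = φ c - 1

/-- `φ` is monotone: increasing or decreasing. -/
def MonMap {m n : ℕ} (φ : ZMod m → ZMod n) : Prop :=
  IncMap φ ∨ DecMap φ

/-- `φ` is monotone in the weak sense where constant maps also count. -/
def MonOrConst {m n : ℕ} (φ : ZMod m → ZMod n) : Prop :=
  (∀ c, φ (c + 1) = φ c + 1 ∨ φ (c + 1) = φ c) ∨ DecMap φ

/-- `Y ≤* X`: `Y` is a `*`-substring of `X`, via a strictly increasing selection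
function `α` with `Y i = X (α i)` unless `Y i = *`. -/
def StarSub {p q : ℕ} (Y : Fin p → Orient) (X : Fin q → Orient) : Prop :=
  ∃ α : Fin p → Fin q, StrictMono α ∧ ∀ i, Y i = X (α i) ∨ Y i = Orient.star

/-- The orientation string of the (pointed) cycle `f`. -/
def cycStr {m : ℕ} (f : ZMod m → Orient) : Fin m → Orient :=
  fun j => f ((j : ℕ) : ZMod m)

/-- The orientation string `σ^i(Y^k)` = `(σ^i Y)^k`: the `i`-th shift of the
`k`-fold concatenation of the string of the cycle `fY`. -/
def shiftPowStr {s : ℕ} (fY : ZMod s → Orient) (k : ℕ) (i : ZMod s) :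
    Fin (k * s) → Orient :=
  fun j => fY (i + ((j : ℕ) : ZMod s))

/-- The orientation string `σ^i(Y)^k y_{i+1}` : the `i`-th shift of the `k`-fold
concatenation of the string of `fY`, extended by its own first letter. -/
def shiftPowExtStr {s : ℕ} (fY : ZMod s → Orient) (k : ℕ) (i : ZMod s) :
    Fin (k * s + 1) → Orient :=
  fun j => fY (i + ((j : ℕ) : ZMod s))

/-- Every vertex that moves from `φ` to `ψ`, moves up. -/
def MovesUpOnly {m n : ℕ} (φ ψ : ZMod m → ZMod n) : Prop :=
  ∀ c, ψ c = φ c ∨ ψ c = φ c + 1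

/-- Every vertex that moves from `φ` to `ψ`, moves down. -/
def MovesDownOnly {m n : ℕ} (φ ψ : ZMod m → ZMod n) : Prop :=
  ∀ c, ψ c = φ c ∨ ψ c = φ c - 1

/-- `φψ` is an up edge of the Hom-graph. -/
def UpEdge {m n : ℕ} (rC : ZMod m → ZMod m → Prop) (rD : ZMod n → ZMod n → Prop)
    (φ ψ : ZMod m → ZMod n) : Prop :=
  HomEdge rC rD φ ψ ∧ MovesUpOnly φ ψ

/-- `φ` and `ψ` are joined by a path (walk) inside the induced subgraph on `S`. -/
def ConnIn {m n : ℕ} (rC : ZMod m → ZMod m → Prop) (rD : ZMod n → ZMod n → Prop)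
    (S : Set (ZMod m → ZMod n)) (φ ψ : ZMod m → ZMod n) : Prop :=
  Relation.ReflTransGen (fun a b => a ∈ S ∧ b ∈ S ∧ HomEdge rC rD a b) φ ψ

/-- `ψ` is reachable from `φ` by a path of up edges inside `S`. -/
def UpReachIn {m n : ℕ} (rC : ZMod m → ZMod m → Prop) (rD : ZMod n → ZMod n → Prop)
    (S : Set (ZMod m → ZMod n)) (φ ψ : ZMod m → ZMod n) : Prop :=
  Relation.ReflTransGen (fun a b => a ∈ S ∧ b ∈ S ∧ UpEdge rC rD a b) φ ψ

/-- One step of a path of up edges between homomorphisms. -/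
def UpStep {m n : ℕ} (rC : ZMod m → ZMod m → Prop) (rD : ZMod n → ZMod n → Prop)
    (φ ψ : ZMod m → ZMod n) : Prop :=
  IsHom rC rD φ ∧ IsHom rC rD ψ ∧ UpEdge rC rD φ ψ

/-- The set of vertices on which `φ` and `φ'` differ. -/
def Neq {α β : Type*} (φ φ' : α → β) : Set α := {g | φ g ≠ φ' g}

/-- The map `φ_T`, agreeing with `φ'` on `T` and with `φ` elsewhere. -/
noncomputable def refineMap {α β : Type*} (φ φ' : α → β) (T : Set α) : α → β :=
  fun g => if g ∈ T then φ' g else φ g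

/-- The edge `φφ'` is non-refinable: no nonempty proper subset `T` of `Neq φ φ'`
yields a homomorphism `φ_T`. -/
def NonRefinable {α β : Type*} (rG : α → α → Prop) (rH : β → β → Prop)
    (φ φ' : α → β) : Prop :=
  ¬ ∃ T : Set α, T.Nonempty ∧ T ⊂ Neq φ φ' ∧ IsHom rG rH (refineMap φ φ' T)

/-- `T` is a strong component of the digraph `r`. -/
def IsStrongComponent {α : Type*} (r : α → α → Prop) (T : Set α) : Prop :=
  T.Nonempty ∧ (∀ u ∈ T, ∀ v ∈ T, Relation.ReflTransGen r u v) ∧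
    ∀ T' : Set α, T ⊆ T' → (∀ u ∈ T', ∀ v ∈ T', Relation.ReflTransGen r u v) → T' = T

/-- `T` has no arcs out to vertices not in `T`. -/
def IsTerminal {α : Type*} (r : α → α → Prop) (T : Set α) : Prop :=
  ∀ u ∈ T, ∀ v, r u v → v ∈ T

/-- `Mon_1(C,D;i)`: monotone wind-1 homomorphisms `φ` with `φ c₀ = i`. -/
def Mon1 {m n : ℕ} (fC : ZMod m → Orient) (fD : ZMod n → Orient) (i : ZMod n) :
    Set (ZMod m → ZMod n) :=
  {φ | IsHom (cycRel fC) (cycRel fD) φ ∧ MonMap φ ∧ increase φ = (n : ℤ) ∧ φ 0 = i}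

/-- A one-step up edge: an edge from `φ` obtained by moving all the vertices of a
subpath of `C` mapped to a single vertex `d` up to `d + 1`. -/
def OneStepUp {m n : ℕ} (rC : ZMod m → ZMod m → Prop) (rD : ZMod n → ZMod n → Prop)
    (φ φ' : ZMod m → ZMod n) : Prop :=
  HomEdge rC rD φ φ' ∧
    ∃ (a : ZMod m) (k : ℕ) (d : ZMod n), k < m ∧
      (∀ j : ℕ, j ≤ k → φ (a + ((j : ℕ) : ZMod m)) = d) ∧
      ∀ c, φ' c = if ∃ j : ℕ, j ≤ k ∧ c = a + ((j : ℕ) : ZMod m) then d + 1 else φ c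

/-- The number of increasing edges of `φ` among the first `j` edges of `C`. -/
def incBefore {m n : ℕ} (φ : ZMod m → ZMod n) (j : ℕ) : ℕ :=
  ((Finset.range j).filter fun t =>
    φ (((t : ℕ) : ZMod m) + 1) = φ ((t : ℕ) : ZMod m) + 1).card

/-- One cutback-pushing step: `φ'` is obtained from `φ` by replacing the values of
`φ` on a cutback `c_a … c_{a+L}` by `φ a`. -/
def CutbackStep {m n : ℕ} (φ φ' : ZMod m → ZMod n) : Prop :=
  ∃ (a : ZMod m) (L : ℕ), L < m ∧ partialInc φ a L = 0 ∧
    (∀ j : ℕ, 0 < j → j < L → partialInc φ a j < 0) ∧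
    ∀ c, φ' c = if ∃ j : ℕ, j ≤ L ∧ c = a + ((j : ℕ) : ZMod m) then φ a else φ c

/-- `Mon_1^+(C,D;i)`: wind-1 homomorphisms whose monotone push-up is in `Mon_1(C,D;i)`. -/
def Mon1Plus {m n : ℕ} (fC : ZMod m → Orient) (fD : ZMod n → Orient) (i : ZMod n) :
    Set (ZMod m → ZMod n) :=
  {φ | IsHom (cycRel fC) (cycRel fD) φ ∧ increase φ = (n : ℤ) ∧
    ∃ ψ ∈ Mon1 fC fD i, Relation.ReflTransGen CutbackStep φ ψ}

/-! For non-contractible `D`, each arc `u → v` of `D` has a displacement `v - u` lifting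
canonically to `{-1, 0, 1}` (`unitLift`), and the lifts along a transitive triangle of `D` add up
exactly: no triangle wraps around `D`. Given an arc `φ → ψ` of `Hom(C,D)` and an arc `x → y` of
`C`, the square `φ x, φ y, ψ x, ψ y` splits into two such triangles sharing the arc
`φ x → ψ y`. So the change of the edge value of `c c₊₁` from `φ` to `ψ` is the difference of the
lifted displacements `unitLift (ψ c - φ c)` at its ends, and these differences telescope to zero
around `C`. -/

def unitLift {n : ℕ} (x : ZMod n) : ℤ := if x = 1 then 1 else if x = -1 then -1 else 0

lemma eq_of_intCast_eq_of_abs_sub_lt {n : ℕ} {a b : ℤ} (h : (a : ZMod n) = b)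
    (hab : |b - a| < n) : a = b :=
  (sub_eq_zero.mp (Int.eq_zero_of_abs_lt_dvd ((ZMod.intCast_eq_intCast_iff_dvd_sub a b n).mp h)
    hab)).symm

lemma unitLift_intCast {n : ℕ} (hn : 3 ≤ n) {k : ℤ} (hk : |k| ≤ 1) :
    unitLift (k : ZMod n) = k := by
  have hn' : (3 : ℤ) ≤ n := by exact_mod_cast hn
  rw [abs_le] at hk
  have hcast : ∀ l : ℤ, |l| ≤ 1 → (k : ZMod n) = l → k = l := fun l hl h =>
    eq_of_intCast_eq_of_abs_sub_lt h (by rw [abs_le] at hl; rw [abs_lt]; constructor <;> linarith)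
  unfold unitLift
  split_ifs with h1 h2
  · exact (hcast 1 (by norm_num) (by exact_mod_cast h1)).symm
  · exact (hcast (-1) (by norm_num) (by exact_mod_cast h2)).symm
  · have : k ≠ 1 := fun h => h1 (by simp [h])
    have : k ≠ -1 := fun h => h2 (by simp [h])
    omega

lemma unitLift_neg {n : ℕ} (hn : 3 ≤ n) (x : ZMod n) : unitLift (-x) = -unitLift x := by
  have : Fact (2 < n) := ⟨hn⟩
  have hne : (-1 : ZMod n) ≠ 1 := ZMod.neg_one_ne_one
  unfold unitLift
  by_cases h1 : x = 1
  · simp [h1, hne]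
  by_cases h2 : x = -1
  · simp [h2, hne]
  simp [h1, h2, neg_eq_iff_eq_neg]

lemma edgeVal_eq_unitLift {m n : ℕ} (φ : ZMod m → ZMod n) (c : ZMod m) :
    edgeVal φ c = unitLift (φ (c + 1) - φ c) := by
  simp only [edgeVal, unitLift, sub_eq_iff_eq_add', ← sub_eq_add_neg]

def ArcsLiftTo {n : ℕ} (r : ZMod n → ZMod n → Prop) (lo hi : ℤ) : Prop :=
  ∀ u v, r u v → ∃ k : ℤ, lo ≤ k ∧ k ≤ hi ∧ v - u = k

lemma unitLift_add_of_arcsLiftTo {n : ℕ} {r : ZMod n → ZMod n → Prop} {lo hi : ℤ}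
    (hn : 3 ≤ n) (hlo : -1 ≤ lo) (hhi : hi ≤ 1) (hwidth : hi - lo + 1 < n)
    (hr : ArcsLiftTo r lo hi) {u v w : ZMod n} (huv : r u v) (hvw : r v w) (huw : r u w) :
    unitLift (w - u) = unitLift (v - u) + unitLift (w - v) := by
  obtain ⟨k₁, hk₁, hk₁', h₁⟩ := hr u v huv
  obtain ⟨k₂, hk₂, hk₂', h₂⟩ := hr v w hvw
  obtain ⟨k₃, hk₃, hk₃', h₃⟩ := hr u w huw
  -- the window keeps `|k₃ - (k₁ + k₂)| < n`, so the congruence `k₁ + k₂ ≡ k₃` is an equality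
  have hsum : k₁ + k₂ = k₃ := by
    refine eq_of_intCast_eq_of_abs_sub_lt (n := n) ?_ ?_
    · push_cast; rw [← h₁, ← h₂, ← h₃]; ring
    · rw [abs_lt]; constructor <;> linarith
  rw [h₁, h₂, h₃, ← hsum, unitLift_intCast hn (abs_le.mpr ⟨by linarith, by linarith⟩),
    unitLift_intCast hn (abs_le.mpr ⟨by linarith, by linarith⟩),
    unitLift_intCast hn (abs_le.mpr ⟨by linarith, by linarith⟩)]

lemma cycRel_refl {m : ℕ} (f : ZMod m → Orient) (c : ZMod m) : cycRel f c c :=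
  Or.inl rfl

lemma cycRel_add_one_or_rev {m : ℕ} (f : ZMod m → Orient) (c : ZMod m) :
    cycRel f c (c + 1) ∨ cycRel f (c + 1) c := by
  cases h : f c
  · exact Or.inl (Or.inr (Or.inl ⟨rfl, by simp [h, Orient.fwd]⟩))
  · exact Or.inr (Or.inr (Or.inr ⟨rfl, by simp [h, Orient.bwd]⟩))
  · exact Or.inl (Or.inr (Or.inl ⟨rfl, by simp [h, Orient.fwd]⟩))

lemma arcsLiftTo_cycRel {n : ℕ} (f : ZMod n → Orient) : ArcsLiftTo (cycRel f) (-1) 1 := by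
  rintro u v (rfl | ⟨rfl, -⟩ | ⟨rfl, -⟩)
  · exact ⟨0, by norm_num, by norm_num, by simp⟩
  · exact ⟨1, by norm_num, by norm_num, by simp⟩
  · exact ⟨-1, by norm_num, by norm_num, by simp⟩

lemma arcsLiftTo_cycRel_of_forall_plus {n : ℕ} {f : ZMod n → Orient}
    (hf : ∀ i, f i = Orient.plus) : ArcsLiftTo (cycRel f) 0 1 := by
  rintro u v (rfl | ⟨rfl, -⟩ | ⟨-, hb⟩)
  · exact ⟨0, by norm_num, by norm_num, by simp⟩
  · exact ⟨1, by norm_num, by norm_num, by simp⟩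
  · simp [hf, Orient.bwd] at hb

lemma arcsLiftTo_cycRel_of_forall_minus {n : ℕ} {f : ZMod n → Orient}
    (hf : ∀ i, f i = Orient.minus) : ArcsLiftTo (cycRel f) (-1) 0 := by
  rintro u v (rfl | ⟨-, hf'⟩ | ⟨rfl, -⟩)
  · exact ⟨0, by norm_num, by norm_num, by simp⟩
  · simp [hf, Orient.fwd] at hf'
  · exact ⟨-1, by norm_num, by norm_num, by simp⟩

lemma NonContractible.three_le {n : ℕ} {f : ZMod n → Orient} (hf : NonContractible f) :
    3 ≤ n := by
  rcases hf with h | ⟨h, -⟩ <;> omega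

lemma NonContractible.unitLift_add {n : ℕ} {f : ZMod n → Orient} (hf : NonContractible f)
    {u v w : ZMod n} (huv : cycRel f u v) (hvw : cycRel f v w) (huw : cycRel f u w) :
    unitLift (w - u) = unitLift (v - u) + unitLift (w - v) := by
  have hn := hf.three_le
  rcases hf with h4 | ⟨h3, hplus | hminus⟩
  · exact unitLift_add_of_arcsLiftTo hn le_rfl le_rfl (by push_cast; omega)
      (arcsLiftTo_cycRel f) huv hvw huw
  · exact unitLift_add_of_arcsLiftTo hn (by norm_num) le_rfl (by push_cast; omega)
      (arcsLiftTo_cycRel_of_forall_plus hplus) huv hvw huw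
  · exact unitLift_add_of_arcsLiftTo hn le_rfl (by norm_num) (by push_cast; omega)
      (arcsLiftTo_cycRel_of_forall_minus hminus) huv hvw huw

lemma unitLift_square {α : Type*} {n : ℕ} {rC : α → α → Prop} {fD : ZMod n → Orient}
    {φ ψ : α → ZMod n} (hD : NonContractible fD) (hC : ∀ x, rC x x)
    (hφ : IsHom rC (cycRel fD) φ) (hψ : IsHom rC (cycRel fD) ψ)
    (hA : HomArc rC (cycRel fD) φ ψ) {x y : α} (hxy : rC x y) :
    unitLift (φ y - φ x) + unitLift (ψ y - φ y) =
      unitLift (ψ x - φ x) + unitLift (ψ y - ψ x) := by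
  rw [← hD.unitLift_add (hφ x y hxy) (hA y y (hC y)) (hA x y hxy),
    ← hD.unitLift_add (hA x x (hC x)) (hψ x y hxy) (hA x y hxy)]

section CycleHoms

variable {m n : ℕ} {fC : ZMod m → Orient} {fD : ZMod n → Orient} {φ ψ : ZMod m → ZMod n}

lemma edgeVal_sub_edgeVal_of_homArc (hD : NonContractible fD)
    (hφ : IsHom (cycRel fC) (cycRel fD) φ) (hψ : IsHom (cycRel fC) (cycRel fD) ψ)
    (hA : HomArc (cycRel fC) (cycRel fD) φ ψ) (c : ZMod m) :
    edgeVal ψ c - edgeVal φ c = unitLift (ψ (c + 1) - φ (c + 1)) - unitLift (ψ c - φ c) := by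
  rw [edgeVal_eq_unitLift, edgeVal_eq_unitLift]
  rcases cycRel_add_one_or_rev fC c with h | h
  · linarith [unitLift_square hD (cycRel_refl fC) hφ hψ hA h]
  · have hneg := unitLift_neg hD.three_le
    rw [← neg_sub (φ c), ← neg_sub (ψ c), hneg, hneg]
    linarith [unitLift_square hD (cycRel_refl fC) hφ hψ hA h]

lemma increase_eq_of_homArc (hD : NonContractible fD)
    (hφ : IsHom (cycRel fC) (cycRel fD) φ) (hψ : IsHom (cycRel fC) (cycRel fD) ψ)
    (hA : HomArc (cycRel fC) (cycRel fD) φ ψ) : increase φ = increase ψ := by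
  set δ : ℕ → ℤ := fun j => unitLift (ψ (j : ZMod m) - φ (j : ZMod m))
  have hstep : ∀ j ∈ Finset.range m,
      edgeVal ψ (j : ZMod m) - edgeVal φ (j : ZMod m) = δ (j + 1) - δ j := fun j _ => by
    simp only [edgeVal_sub_edgeVal_of_homArc hD hφ hψ hA, δ, Nat.cast_succ]
  have hdiff : increase ψ - increase φ = δ m - δ 0 := by
    rw [increase, increase, ← Finset.sum_sub_distrib, Finset.sum_congr rfl hstep,
      Finset.sum_range_sub]
  have hδ : δ m = δ 0 := by simp [δ]
  linarith

lemma increase_eq_of_homEdge (hD : NonContractible fD)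
    (hφ : IsHom (cycRel fC) (cycRel fD) φ) (hψ : IsHom (cycRel fC) (cycRel fD) ψ)
    (hE : HomEdge (cycRel fC) (cycRel fD) φ ψ) : increase φ = increase ψ := by
  rcases hE with hA | hA
  · exact increase_eq_of_homArc hD hφ hψ hA
  · exact (increase_eq_of_homArc hD hψ hφ hA).symm

end CycleHoms

theorem wind_constant_on_components_general (m n : ℕ)
    (fC : ZMod m → Orient) (fD : ZMod n → Orient) (hD : NonContractible fD)
    (φ ψ : ZMod m → ZMod n)
    (hconn : Relation.ReflTransGen
      (fun a b => IsHom (cycRel fC) (cycRel fD) a ∧ IsHom (cycRel fC) (cycRel fD) b ∧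
        HomEdge (cycRel fC) (cycRel fD) a b) φ ψ) :
    increase φ = increase ψ := by
  induction hconn with
  | refl => rfl
  | tail _ hstep ih =>
    obtain ⟨hb, hc, he⟩ := hstep
    exact ih.trans (increase_eq_of_homEdge hD hb hc he)

/-- For reflexive digraph cycles `C` and `D` with `D` non-contractible,
the wind (equivalently, the increase) of homomorphisms is constant over connected
components of `Hom(C,D)`. -/
theorem wind_constant_on_components (m n : ℕ) (hm : 3 ≤ m)
    (fC : ZMod m → Orient) (fD : ZMod n → Orient) (hD : NonContractible fD)
    (φ ψ : ZMod m → ZMod n)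
    (hφ : IsHom (cycRel fC) (cycRel fD) φ) (hψ : IsHom (cycRel fC) (cycRel fD) ψ)
    (hconn : Relation.ReflTransGen
      (fun a b => IsHom (cycRel fC) (cycRel fD) a ∧ IsHom (cycRel fC) (cycRel fD) b ∧
        HomEdge (cycRel fC) (cycRel fD) a b) φ ψ) :
    increase φ = increase ψ :=
  wind_constant_on_components_general m n fC fD hD φ ψ hconn

end Recon
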